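/- Suppose there exist functions A, B : ℝ⁵ → ℂ such that [L̄, T] f = A·(T f) + B·(S f) for every smooth f : ℝ⁵ → ℂ, and suppose that at every point p ∈ ℝ⁵ the two vectors ( (T u₁)(p), (T u₂)(p), (T u₃)(p) ) and ( (S u₁)(p), (S u₂)(p), (S u₃)(p) ) of ℂ³ are linearly independent over ℂ, where u_j denotes the j-th fiber coordinate function (x, y, u₁, u₂, u₃) ↦ u_j. Then B·conj(B) ≡ 1 and conj(A) + conj(B)·A ≡ 0 on ℝ⁵. (These are the paper's boxed relations B B̄ = 1 and Ā + B̄ A = 0 for General Class III₂.) -/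

import Mathlib

/-!
Complex conjugation intertwines `L` and `L̄`, so `T` commutes with conjugation and
`S f̄ = conj (S̄ f)`. For a real function `u`, such as a fiber coordinate, conjugating
`S̄ u = A·T u + B·S u` gives `S u = Ā·T u + B̄·(A·T u + B·S u)`, that is
`(Ā + B̄ A)·T u + (B̄ B − 1)·S u = 0`. Applied to `u₁, u₂, u₃`, the linear independence of
`(T u_k)_k` and `(S u_k)_k` forces both coefficients to vanish.
-/

noncomputable section
open Complex ComplexConjugate

/-- Points of `ℝ⁵`, with coordinates `(x, y, u₁, u₂, u₃)` and `z = x + i y`. -/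
abbrev V5 := Fin 5 → ℝ

/-- Partial derivative in the `j`-th coordinate direction. -/
def pd (j : Fin 5) (f : V5 → ℂ) : V5 → ℂ := fun p => fderiv ℝ f p (Pi.single j 1)

/-- Wirtinger derivative `f_z := (f_x − i f_y)/2`. -/
def wz (f : V5 → ℂ) : V5 → ℂ := fun p => (pd 0 f p - I * pd 1 f p) / 2

/-- Wirtinger derivative `f_z̄ := (f_x + i f_y)/2`. -/
def wzb (f : V5 → ℂ) : V5 → ℂ := fun p => (pd 0 f p + I * pd 1 f p) / 2

variable (a₁ a₂ a₃ : V5 → ℂ)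

/-- The operator `L f := f_z + a₁ f_{u₁} + a₂ f_{u₂} + a₃ f_{u₃}`. -/
def Lop (f : V5 → ℂ) : V5 → ℂ := fun p =>
  wz f p + a₁ p * pd 2 f p + a₂ p * pd 3 f p + a₃ p * pd 4 f p

/-- The operator `L̄ f := f_z̄ + ā₁ f_{u₁} + ā₂ f_{u₂} + ā₃ f_{u₃}`. -/
def Lbop (f : V5 → ℂ) : V5 → ℂ := fun p =>
  wzb f p + conj (a₁ p) * pd 2 f p + conj (a₂ p) * pd 3 f p + conj (a₃ p) * pd 4 f p

/-- The operator `T := i·[L, L̄]`. -/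
def Tof (f : V5 → ℂ) : V5 → ℂ := fun p =>
  I * (Lop a₁ a₂ a₃ (Lbop a₁ a₂ a₃ f) p - Lbop a₁ a₂ a₃ (Lop a₁ a₂ a₃ f) p)

/-- The operator `S := [L, T]`. -/
def Sof (f : V5 → ℂ) : V5 → ℂ := fun p =>
  Lop a₁ a₂ a₃ (Tof a₁ a₂ a₃ f) p - Tof a₁ a₂ a₃ (Lop a₁ a₂ a₃ f) p

/-- The operator `S̄ := [L̄, T]`. -/
def Sbof (f : V5 → ℂ) : V5 → ℂ := fun p =>
  Lbop a₁ a₂ a₃ (Tof a₁ a₂ a₃ f) p - Tof a₁ a₂ a₃ (Lbop a₁ a₂ a₃ f) p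

/-- The `j`-th fiber coordinate function `(x, y, u₁, u₂, u₃) ↦ u_j`, `j = 1, 2, 3`. -/
def uc (k : Fin 3) : V5 → ℂ := fun q => (q (k.addNat 2) : ℂ)

lemma fderiv_conj_apply {E : Type*} [NormedAddCommGroup E] [NormedSpace ℝ E] (f : E → ℂ)
    (p v : E) : fderiv ℝ (fun q => conj (f q)) p v = conj (fderiv ℝ f p v) := by
  rw [show (fun q => conj (f q)) = (conjCLE : ℂ → ℂ) ∘ f from rfl,
    ContinuousLinearEquiv.comp_fderiv]
  rfl

lemma pd_conj (j : Fin 5) (f : V5 → ℂ) (p : V5) :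
    pd j (fun q => conj (f q)) p = conj (pd j f p) :=
  fderiv_conj_apply f p _

lemma Lop_conj (f : V5 → ℂ) :
    Lop a₁ a₂ a₃ (fun q => conj (f q)) = fun p => conj (Lbop a₁ a₂ a₃ f p) := by
  funext p
  simp only [Lop, Lbop, wz, wzb, pd_conj, map_add, map_div₀, map_mul, conj_I, conj_conj,
    map_ofNat]
  ring

lemma Lbop_conj (f : V5 → ℂ) :
    Lbop a₁ a₂ a₃ (fun q => conj (f q)) = fun p => conj (Lop a₁ a₂ a₃ f p) := by
  funext p
  simp only [Lop, Lbop, wz, wzb, pd_conj, map_add, map_sub, map_div₀, map_mul, conj_I,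
    map_ofNat]
  ring

lemma Tof_conj (f : V5 → ℂ) :
    Tof a₁ a₂ a₃ (fun q => conj (f q)) = fun p => conj (Tof a₁ a₂ a₃ f p) := by
  funext p
  simp only [Tof, Lbop_conj, Lop_conj, map_mul, map_sub, conj_I]
  ring

lemma Sof_conj (f : V5 → ℂ) :
    Sof a₁ a₂ a₃ (fun q => conj (f q)) = fun p => conj (Sbof a₁ a₂ a₃ f p) := by
  funext p
  simp only [Sof, Sbof, Tof_conj, Lop_conj, map_sub]

lemma combination_eq_zero_of_conj_eq {A B t s sb : ℂ} (ht : conj t = t) (hs : s = conj sb)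
    (hsb : sb = A * t + B * s) :
    (conj A + conj B * A) * t + (B * conj B - 1) * s = 0 := by
  have hcs : conj s = sb := by rw [hs, conj_conj]
  have hs_expand : s = conj A * t + conj B * (A * t + B * s) :=
    calc s = conj (A * t + B * s) := hs.trans (congrArg conj hsb)
      _ = conj A * conj t + conj B * conj s := by rw [map_add, map_mul, map_mul]
      _ = conj A * t + conj B * (A * t + B * s) := by rw [ht, hcs, hsb]
  linear_combination -hs_expand

lemma combination_eq_zero_of_real {f : V5 → ℂ} (hf : (fun q => conj (f q)) = f) {A B : ℂ}
    {p : V5} (h : Sbof a₁ a₂ a₃ f p = A * Tof a₁ a₂ a₃ f p + B * Sof a₁ a₂ a₃ f p) :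
    (conj A + conj B * A) * Tof a₁ a₂ a₃ f p + (B * conj B - 1) * Sof a₁ a₂ a₃ f p = 0 := by
  refine combination_eq_zero_of_conj_eq ?_ ?_ h
  · simpa only [hf] using (congrFun (Tof_conj a₁ a₂ a₃ f) p).symm
  · simpa only [hf] using congrFun (Sof_conj a₁ a₂ a₃ f) p

lemma conj_uc (k : Fin 3) : (fun q => conj (uc k q)) = uc k := by
  funext q
  simp [uc, conj_ofReal]

lemma contDiff_uc (k : Fin 3) : ContDiff ℝ (⊤ : ℕ∞) (uc k) :=
  ofRealCLM.contDiff.comp (contDiff_apply ℝ ℝ (k.addNat 2))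

theorem class_III₂_boxed_relations
    (A B : V5 → ℂ)
    (hAB : ∀ f : V5 → ℂ, ContDiff ℝ (⊤ : ℕ∞) f → ∀ p,
        Lbop a₁ a₂ a₃ (Tof a₁ a₂ a₃ f) p - Tof a₁ a₂ a₃ (Lbop a₁ a₂ a₃ f) p
          = A p * Tof a₁ a₂ a₃ f p + B p * Sof a₁ a₂ a₃ f p)
    (hindep : ∀ p, LinearIndependent ℂ
        ![fun k : Fin 3 => Tof a₁ a₂ a₃ (uc k) p,
          fun k : Fin 3 => Sof a₁ a₂ a₃ (uc k) p]) :
    ∀ p, B p * conj (B p) = 1 ∧ conj (A p) + conj (B p) * A p = 0 := by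
  intro p
  have hcomb : ∀ k, (conj (A p) + conj (B p) * A p) * Tof a₁ a₂ a₃ (uc k) p
      + (B p * conj (B p) - 1) * Sof a₁ a₂ a₃ (uc k) p = 0 := fun k =>
    combination_eq_zero_of_real a₁ a₂ a₃ (conj_uc k) (hAB (uc k) (contDiff_uc k) p)
  obtain ⟨hT, hS⟩ := LinearIndependent.pair_iff.1 (hindep p) _ _ (funext hcomb)
  exact ⟨by linear_combination hS, hT⟩

end
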